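/- arXiv:2107.09107 — 2 statements merged into one kernel-verified Lean document; each statement's English description precedes it below -/
import Mathlib

section
/- For every fixed integer k ≥ 2 there is a constant C > 0 such that for all M ≥ 3, the number of integers a with 2 < a ≤ M and N_k(a) > k(k-1) is at most C · M^{1/2} · (log M)^{k-1}. -/
/-!
Every `a` has the `k(k-1)` trivial representations `a = multinomial (a-1, 1, 0, …, 0)` (and their
permutations), so an `a` with `N_k(a) > k(k-1)` has some other representation `m`. Let `m i` be a
largest part of `m`. The other parts then sum to at least `2`, whence `a ≥ C(m i + 2, 2)` and
`m i ≤ √(2a)`; every other part satisfies `a ≥ C(2 m j, m j) ≥ 2 ^ m j`, so `m j ≤ log₂ a`. Thus all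
such `a ≤ M` are multinomials of tuples from a set of `k (√(2M) + 1) (log₂ M + 1) ^ (k-1)` tuples.
-/

/-- `Nk k a` is the number of `k`-tuples `(m₁, …, m_k)` of nonnegative integers whose
multinomial coefficient `(m₁ + ⋯ + m_k)! / (m₁! ⋯ m_k!)` equals `a`. -/
noncomputable def Nk (k : ℕ) (a : ℕ) : ℕ :=
  {m : Fin k → ℕ | Nat.multinomial Finset.univ m = a}.ncard

open Finset

namespace Nat

theorem two_pow_le_centralBinom (n : ℕ) : 2 ^ n ≤ centralBinom n := by
  induction n with
  | zero => simp
  | succ n ih =>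
    refine Nat.le_of_mul_le_mul_left ?_ n.succ_pos
    calc (n + 1) * 2 ^ (n + 1) ≤ 2 * (2 * n + 1) * centralBinom n := by
          rw [pow_succ]; nlinarith
      _ = (n + 1) * centralBinom (n + 1) := (succ_mul_centralBinom_succ n).symm

variable {ι : Type*} [Fintype ι] [DecidableEq ι]

theorem multinomial_univ_eq_choose_mul (m : ι → ℕ) (i : ι) :
    multinomial univ m = (∑ j, m j).choose (m i) * multinomial (univ.erase i) m := by
  conv_lhs => rw [← insert_erase (mem_univ i), multinomial_insert (notMem_erase i _)]
  rw [add_sum_erase _ _ (mem_univ i)]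

theorem choose_le_multinomial_univ (m : ι → ℕ) (i : ι) :
    (∑ j, m j).choose (m i) ≤ multinomial univ m := by
  rw [multinomial_univ_eq_choose_mul m i]
  exact Nat.le_mul_of_pos_right _ (multinomial_pos _ _)

theorem multinomial_eq_one_of_sum_le_one {α : Type*} (s : Finset α) (f : α → ℕ)
    (h : ∑ i ∈ s, f i ≤ 1) : multinomial s f = 1 := by
  have hfac : ∀ n ≤ 1, n ! = 1 := by
    intro n hn; interval_cases n <;> rfl
  have hspec := multinomial_spec s f
  rwa [prod_eq_one fun i hi => hfac _ ((single_le_sum (fun j _ => zero_le (f j)) hi).trans h),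
    hfac _ h, one_mul] at hspec

theorem two_pow_le_multinomial_univ {m : ι → ℕ} {i j : ι} (hij : i ≠ j) (hji : m j ≤ m i) :
    2 ^ m j ≤ multinomial univ m := by
  have hpair : m i + m j ≤ ∑ l, m l := by
    simpa [sum_pair hij] using sum_le_sum_of_subset (f := m) (subset_univ {i, j})
  calc 2 ^ m j ≤ centralBinom (m j) := two_pow_le_centralBinom _
    _ ≤ (∑ l, m l).choose (m j) := by
      rw [centralBinom_eq_two_mul_choose]; exact choose_le_choose _ (by omega)
    _ ≤ multinomial univ m := choose_le_multinomial_univ m j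

theorem choose_two_le_multinomial_univ {m : ι → ℕ} {i : ι}
    (h : 2 ≤ ∑ j ∈ univ.erase i, m j) : (m i + 2).choose 2 ≤ multinomial univ m := by
  calc (m i + 2).choose 2 = (m i + 2).choose (m i) := choose_symm_add.symm
    _ ≤ (∑ j, m j).choose (m i) := by
      rw [← add_sum_erase _ _ (mem_univ i)]; exact choose_le_choose _ (by omega)
    _ ≤ multinomial univ m := choose_le_multinomial_univ m i

theorem le_sqrt_two_mul_of_choose_two_le {n M : ℕ} (h : (n + 2).choose 2 ≤ M) :
    n ≤ sqrt (2 * M) := by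
  rw [choose_two_right, show n + 2 - 1 = n + 1 from rfl] at h
  rw [le_sqrt]
  have : (n + 2) * (n + 1) = n * n + 3 * n + 2 := by ring
  omega

end Nat

section TrivialTuple

variable {ι : Type*} [Fintype ι] [DecidableEq ι]

def trivialTuple (a : ℕ) (i j : ι) : ι → ℕ :=
  fun l => if l = i then a - 1 else if l = j then 1 else 0

theorem two_le_sum_erase_of_ne_trivialTuple {m : ι → ℕ} {i : ι}
    (h1 : 1 < Nat.multinomial univ m)
    (hm : ∀ j, j ≠ i → m ≠ trivialTuple (Nat.multinomial univ m) i j) :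
    2 ≤ ∑ j ∈ univ.erase i, m j := by
  by_contra! hs
  set s := ∑ j ∈ univ.erase i, m j
  have hmult : Nat.multinomial univ m = (m i + s).choose (m i) := by
    rw [Nat.multinomial_univ_eq_choose_mul m i, ← add_sum_erase _ _ (mem_univ i),
      Nat.multinomial_eq_one_of_sum_le_one _ _ (by omega), mul_one]
  have hs1 : s = 1 := by
    rcases Nat.lt_succ_iff.1 hs |>.lt_or_eq with h0 | h0
    · simp [Nat.lt_one_iff.1 h0] at hmult; omega
    · exact h0
  obtain ⟨j, hj, hmj⟩ := exists_ne_zero_of_sum_ne_zero (hs1 ▸ one_ne_zero : s ≠ 0)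
  have hji : j ≠ i := ne_of_mem_erase hj
  have hsplit := add_sum_erase _ m hj
  have hrest : ∀ l ∈ (univ.erase i).erase j, m l = 0 :=
    sum_eq_zero_iff.1 (by omega)
  refine hm j hji (funext fun l => ?_)
  simp only [trivialTuple]
  split_ifs with hli hlj
  · rw [hmult, hs1, hli, Nat.choose_succ_self_right]; rfl
  · subst hlj; omega
  · exact hrest l (by simp [hli, hlj])

end TrivialTuple

theorem Nk_le_of_forall_eq_trivialTuple {k a : ℕ}
    (h : ∀ m : Fin k → ℕ, Nat.multinomial univ m = a → ∃ i j, i ≠ j ∧ m = trivialTuple a i j) :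
    Nk k a ≤ k * (k - 1) := by
  have hsub : {m : Fin k → ℕ | Nat.multinomial univ m = a} ⊆
      ↑((univ : Finset (Fin k)).offDiag.image fun p => trivialTuple a p.1 p.2) := by
    intro m hm
    obtain ⟨i, j, hij, rfl⟩ := h m hm
    simpa using ⟨i, j, hij, rfl⟩
  calc Nk k a ≤ _ := Set.ncard_le_ncard hsub (finite_toSet _)
    _ ≤ (univ : Finset (Fin k)).offDiag.card := by
      rw [Set.ncard_coe_finset]; exact card_image_le
    _ = k * (k - 1) := by simp [offDiag_card, Nat.mul_sub_one]

theorem exists_multinomial_eq_of_lt_Nk {k a : ℕ} (h : k * (k - 1) < Nk k a) :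
    ∃ m : Fin k → ℕ, Nat.multinomial univ m = a ∧ ∀ i j, i ≠ j → m ≠ trivialTuple a i j := by
  by_contra! hall
  exact (Nk_le_of_forall_eq_trivialTuple fun m hm => by simpa using hall m hm).not_gt h

section Box

variable (ι : Type*) [Fintype ι] [DecidableEq ι]

def oneLargeBox (B L : ℕ) : Finset (ι → ℕ) :=
  univ.biUnion fun i =>
    Fintype.piFinset (Function.update (fun _ => range (L + 1)) i (range (B + 1)))

variable {ι}

theorem mem_oneLargeBox_of_le {B L : ℕ} {m : ι → ℕ} (i : ι) (hi : m i ≤ B)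
    (hj : ∀ j, j ≠ i → m j ≤ L) : m ∈ oneLargeBox ι B L := by
  simp only [oneLargeBox, mem_biUnion, mem_univ, true_and, Fintype.mem_piFinset]
  refine ⟨i, fun j => ?_⟩
  rcases eq_or_ne j i with rfl | hji
  · simpa [Nat.lt_succ_iff] using hi
  · simpa [hji, Nat.lt_succ_iff] using hj j hji

theorem card_oneLargeBox_le (B L : ℕ) :
    (oneLargeBox ι B L).card ≤ Fintype.card ι * ((B + 1) * (L + 1) ^ (Fintype.card ι - 1)) := by
  refine card_biUnion_le.trans (le_of_eq ?_)
  rw [← smul_eq_mul, ← card_univ, ← sum_const]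
  refine sum_congr rfl fun i _ => ?_
  simp only [Fintype.card_piFinset, Function.apply_update (fun _ s => card s),
    prod_update_of_mem (mem_univ i), card_range, prod_const, card_sdiff, card_univ]
  simp

end Box

theorem exists_mem_oneLargeBox_multinomial_eq {k a M : ℕ} (ha : 1 < a) (haM : a ≤ M)
    (h : k * (k - 1) < Nk k a) :
    ∃ m ∈ oneLargeBox (Fin k) (Nat.sqrt (2 * M)) (Nat.log 2 M), Nat.multinomial univ m = a := by
  obtain ⟨m, hm, hnt⟩ := exists_multinomial_eq_of_lt_Nk h
  have : Nonempty (Fin k) := by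
    by_contra hempty
    rw [not_nonempty_iff, ← univ_eq_empty_iff] at hempty
    simp [hempty] at hm
    omega
  obtain ⟨i, hmax⟩ := Finite.exists_max m
  refine ⟨m, mem_oneLargeBox_of_le i ?_ fun j hji => ?_, hm⟩
  · have hrest := two_le_sum_erase_of_ne_trivialTuple (hm ▸ ha) fun j hji => hm ▸ hnt i j hji.symm
    exact Nat.le_sqrt_two_mul_of_choose_two_le
      ((Nat.choose_two_le_multinomial_univ hrest).trans (hm ▸ haM))
  · exact Nat.le_log_of_pow_le one_lt_two
      ((Nat.two_pow_le_multinomial_univ hji.symm (hmax j)).trans (hm ▸ haM))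

theorem card_filter_lt_Nk_le (k M : ℕ) :
    ((Ioc 2 M).filter fun a => k * (k - 1) < Nk k a).card ≤
      k * ((Nat.sqrt (2 * M) + 1) * (Nat.log 2 M + 1) ^ (k - 1)) := by
  calc _ ≤ ((oneLargeBox (Fin k) (Nat.sqrt (2 * M)) (Nat.log 2 M)).image
          (Nat.multinomial univ)).card := by
        refine card_le_card fun a ha => ?_
        obtain ⟨⟨ha2, haM⟩, hlt⟩ := by simpa using ha
        obtain ⟨m, hbox, hm⟩ := exists_mem_oneLargeBox_multinomial_eq (by omega) haM hlt
        exact mem_image.2 ⟨m, hbox, hm⟩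
    _ ≤ _ := card_image_le.trans (by simpa using card_oneLargeBox_le (ι := Fin k) _ _)

theorem natSqrt_two_mul_add_one_le {M : ℕ} (hM : 1 ≤ M) :
    (Nat.sqrt (2 * M) + 1 : ℝ) ≤ 3 * √M := by
  have hsqrt2 : √(2 : ℝ) ≤ 2 := by
    rw [Real.sqrt_le_left (by norm_num)]; norm_num
  have h1 : (1 : ℝ) ≤ √M := Real.one_le_sqrt.2 (by exact_mod_cast hM)
  have h2 : (Nat.sqrt (2 * M) : ℝ) ≤ √2 * √M := by
    rw [← Real.sqrt_mul zero_le_two]; exact_mod_cast Real.nat_sqrt_le_real_sqrt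
  nlinarith [Real.sqrt_nonneg (M : ℝ)]

theorem natLog_two_add_one_le {M : ℕ} (hM : 2 ≤ M) :
    (Nat.log 2 M + 1 : ℝ) ≤ 2 / Real.log 2 * Real.log M := by
  have hlogb : (1 : ℝ) ≤ Real.logb 2 M := by
    rw [Real.le_logb_iff_rpow_le one_lt_two (by positivity), Real.rpow_one]
    exact_mod_cast hM
  calc (Nat.log 2 M + 1 : ℝ) ≤ 2 * Real.logb 2 M := by
        have := Real.natLog_le_logb M 2; push_cast at this; linarith
    _ = 2 / Real.log 2 * Real.log M := by rw [Real.logb]; ring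

theorem count_large_Nk_general (k : ℕ) :
    ∃ C : ℝ, 0 < C ∧ ∀ M : ℕ, 3 ≤ M →
      (((Finset.Ioc 2 M).filter (fun a => k * (k - 1) < Nk k a)).card : ℝ) ≤
        C * Real.sqrt M * (Real.log M) ^ (k - 1) := by
  have hlog2 : 0 < Real.log 2 := Real.log_pos one_lt_two
  refine ⟨3 * (k + 1) * (2 / Real.log 2) ^ (k - 1), by positivity, fun M hM => ?_⟩
  calc (((Ioc 2 M).filter fun a => k * (k - 1) < Nk k a).card : ℝ)
      ≤ k * ((Nat.sqrt (2 * M) + 1) * (Nat.log 2 M + 1) ^ (k - 1)) := by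
        exact_mod_cast card_filter_lt_Nk_le k M
    _ ≤ (k + 1) * (3 * √M * (2 / Real.log 2 * Real.log M) ^ (k - 1)) := by
        gcongr
        · linarith
        · exact natSqrt_two_mul_add_one_le (by omega)
        · exact natLog_two_add_one_le (by omega)
    _ = 3 * (k + 1) * (2 / Real.log 2) ^ (k - 1) * √M * Real.log M ^ (k - 1) := by ring

theorem count_large_Nk (k : ℕ) (hk : 2 ≤ k) :
    ∃ C : ℝ, 0 < C ∧ ∀ M : ℕ, 3 ≤ M →
      (((Finset.Ioc 2 M).filter (fun a => k * (k - 1) < Nk k a)).card : ℝ) ≤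
        C * Real.sqrt M * (Real.log M) ^ (k - 1) :=
  count_large_Nk_general k
end

section
/- For every fixed integer k ≥ 7, the set of integers a > 1 with N_k(a) ≥ 7·k!/2 + k(k-1) is infinite. -/
/-!
The four 6-tuples `(0,1,4,7,10,13)`, `(0,1,5,6,9,14)`, `(0,2,3,6,10,14)`, `(0,2,4,5,9,15)` have
the same sum and the same product of factorials, so appending a common tail
`(N, N + 1, …, N + k - 7)` with `N ≥ 16` gives four `k`-tuples with the same multinomial
coefficient `a_N > N`. Their entries are distinct and their multisets of entries differ, so the
`k!` rearrangements of the four tuples are `4 · k!` distinct solutions, and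
`4 · k! ≥ 7 · k!/2 + k(k - 1)`. Letting `N` grow gives infinitely many such `a`.
-/

open Finset Nat Function

namespace Nat

variable {α : Type*} {s : Finset α} {f : α → ℕ} {i : α}

theorem choose_le_multinomial [DecidableEq α] (hi : i ∈ s) :
    (∑ j ∈ s, f j).choose (f i) ≤ multinomial s f := by
  rw [← insert_erase hi, multinomial_insert (notMem_erase i s), sum_insert (notMem_erase i s)]
  exact Nat.le_mul_of_pos_right _ (multinomial_pos _ _)

theorem lt_multinomial_of_lt_sum (hi : i ∈ s) (h : f i < ∑ j ∈ s, f j) :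
    f i < multinomial s f := by
  classical
  calc f i < (f i + 1).choose (f i) := by rw [choose_succ_self_right]; omega
    _ ≤ (∑ j ∈ s, f j).choose (f i) := choose_le_choose _ h
    _ ≤ multinomial s f := choose_le_multinomial hi

/-- An entry carrying the whole sum forces the multinomial coefficient down to `1`. -/
theorem lt_multinomial (hi : i ∈ s) (h : 1 < multinomial s f) : f i < multinomial s f := by
  refine lt_multinomial_of_lt_sum hi ((single_le_sum (fun _ _ ↦ zero_le _) hi).lt_of_ne ?_)
  intro hsum
  have hprod : (∑ j ∈ s, f j)! ≤ ∏ j ∈ s, (f j)! :=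
    hsum ▸ single_le_prod' (fun j _ ↦ succ_le_of_lt (factorial_pos (f j))) hi
  have := multinomial_spec s f
  nlinarith [factorial_pos (∑ j ∈ s, f j)]

theorem multinomial_univ_comp_equiv [Fintype α] (f : α → ℕ) (σ : Equiv.Perm α) :
    multinomial univ (f ∘ σ) = multinomial univ f := by
  simp only [multinomial, comp_apply, Equiv.sum_comp σ f, Equiv.prod_comp σ fun i ↦ (f i)!]

theorem multinomial_append_congr {m n : ℕ} {b b' : Fin m → ℕ} (t : Fin n → ℕ)
    (hsum : ∑ i, b i = ∑ i, b' i) (hprod : ∏ i, (b i)! = ∏ i, (b' i)!) :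
    multinomial univ (Fin.append b t) = multinomial univ (Fin.append b' t) := by
  simp only [multinomial, Fin.sum_univ_add, Fin.prod_univ_add, Fin.append_left,
    Fin.append_right, hsum, hprod]

end Nat

theorem finite_setOf_multinomial_eq (k : ℕ) {a : ℕ} (ha : 1 < a) :
    {m : Fin k → ℕ | multinomial univ m = a}.Finite := by
  refine (Set.finite_Iic fun _ ↦ a).subset fun m (hm : multinomial univ m = a) i ↦ ?_
  exact (Nat.lt_multinomial (mem_univ i) (hm ▸ ha)).le.trans_eq hm

theorem card_mul_factorial_le_Nk {ι : Type*} [Fintype ι] {k a : ℕ} (ha : 1 < a)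
    (m : ι → Fin k → ℕ) (hm : ∀ j, multinomial univ (m j) = a)
    (hinj : ∀ j, Injective (m j)) (hdist : Injective fun j ↦ univ.val.map (m j)) :
    Fintype.card ι * k ! ≤ Nk k a := by
  have horbit : Set.InjOn (fun p : ι × Equiv.Perm (Fin k) ↦ m p.1 ∘ p.2) Set.univ := by
    rintro ⟨j, σ⟩ - ⟨j', σ'⟩ - h
    have hj : j = j' := hdist <| by
      simpa only [← Multiset.map_map, Multiset.map_univ_val_equiv] using
        congrArg (univ.val.map ·) h
    subst hj
    exact Prod.ext rfl (Equiv.ext fun x ↦ hinj j (congrFun h x))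
  calc Fintype.card ι * k ! = (Set.univ : Set (ι × Equiv.Perm (Fin k))).ncard := by
        rw [Set.ncard_univ, Nat.card_eq_fintype_card, Fintype.card_prod, Fintype.card_perm,
          Fintype.card_fin]
    _ ≤ Nk k a := Set.ncard_le_ncard_of_injOn _
        (fun p _ ↦ (multinomial_univ_comp_equiv (m p.1) p.2).trans (hm p.1)) horbit
        (finite_setOf_multinomial_eq k ha)

theorem seven_mul_factorial_div_two_add_le {k : ℕ} (hk : 4 ≤ k) :
    7 * k ! / 2 + k * (k - 1) ≤ 4 * k ! := by
  obtain ⟨n, rfl⟩ : ∃ n, k = n + 4 := ⟨k - 4, by omega⟩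
  have h2 : 2 ≤ (n + 2)! := by simpa using factorial_le (show 2 ≤ n + 2 by omega)
  have hdouble : 2 * ((n + 4) * (n + 4 - 1)) ≤ (n + 4)! := by
    rw [show (n + 4)! = (n + 4) * (n + 3) * (n + 2)! by simp [factorial_succ]; ring,
      show n + 4 - 1 = n + 3 by omega]
    nlinarith [Nat.mul_le_mul_left ((n + 4) * (n + 3)) h2]
  omega

def blocks : Fin 4 → Fin 6 → ℕ :=
  ![![0, 1, 4, 7, 10, 13], ![0, 1, 5, 6, 9, 14], ![0, 2, 3, 6, 10, 14], ![0, 2, 4, 5, 9, 15]]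

theorem blocks_sum : ∀ j, ∑ i, blocks j i = ∑ i, blocks 0 i := by decide

theorem blocks_prod_factorial : ∀ j, ∏ i, (blocks j i)! = ∏ i, (blocks 0 i)! := by decide

theorem blocks_injective : ∀ j, Injective (blocks j) := by decide

theorem blocks_lt : ∀ j i, blocks j i < 16 := by decide

theorem blocks_multiset_injective : Injective fun j ↦ univ.val.map (blocks j) := by decide

section Extend

variable {n : ℕ} (t : Fin n → ℕ)

theorem multinomial_append_blocks (j : Fin 4) :
    multinomial univ (Fin.append (blocks j) t) = multinomial univ (Fin.append (blocks 0) t) :=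
  multinomial_append_congr t (blocks_sum j) (blocks_prod_factorial j)

theorem lt_multinomial_append_blocks (i : Fin n) :
    t i < multinomial univ (Fin.append (blocks 0) t) := by
  refine (Fin.append_right (blocks 0) t i).symm.trans_lt
    (lt_multinomial_of_lt_sum (mem_univ _) ?_)
  have h35 : ∑ i, blocks 0 i = 35 := by decide
  have hti : t i ≤ ∑ i, t i := single_le_sum (fun _ _ ↦ zero_le _) (mem_univ i)
  rw [Fin.sum_univ_add]
  simp only [Fin.append_left, Fin.append_right, h35]
  omega

theorem append_blocks_injective (ht : Injective t) (ht16 : ∀ i, 16 ≤ t i) (j : Fin 4) :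
    Injective (Fin.append (blocks j) t) :=
  Fin.append_injective_iff.mpr
    ⟨blocks_injective j, ht, fun i i' ↦ ((blocks_lt j i).trans_le (ht16 i')).ne⟩

theorem append_blocks_multiset_injective :
    Injective fun j ↦ univ.val.map (Fin.append (blocks j) t) := by
  intro j j' h
  simp only [Fin.univ_val_map, List.ofFn_fin_append, ← Multiset.coe_add] at h
  exact blocks_multiset_injective <| by simpa only [Fin.univ_val_map] using add_right_cancel h

end Extend

theorem infinitely_many_very_large_Nk (k : ℕ) (hk : 7 ≤ k) :
    {a : ℕ | 1 < a ∧ 7 * Nat.factorial k / 2 + k * (k - 1) ≤ Nk k a}.Infinite := by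
  obtain ⟨n, rfl⟩ : ∃ n, k = 6 + (n + 1) := ⟨k - 7, by omega⟩
  refine Set.infinite_of_forall_exists_gt fun b ↦ ?_
  set t : Fin (n + 1) → ℕ := fun i ↦ b + 16 + i
  set a := multinomial univ (Fin.append (blocks 0) t)
  have hba : b + 16 < a := lt_multinomial_append_blocks t 0
  refine ⟨a, ⟨by omega, ?_⟩, by omega⟩
  calc 7 * (6 + (n + 1))! / 2 + (6 + (n + 1)) * (6 + (n + 1) - 1)
      ≤ Fintype.card (Fin 4) * (6 + (n + 1))! := seven_mul_factorial_div_two_add_le (by omega)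
    _ ≤ _ := card_mul_factorial_le_Nk (by omega) _ (multinomial_append_blocks t)
        (append_blocks_injective t ((add_right_injective _).comp Fin.val_injective)
          fun i ↦ (Nat.le_add_left 16 b).trans (Nat.le_add_right _ _))
        (append_blocks_multiset_injective t)
end
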